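/- arXiv:1504.02965 — 3 statements merged into one kernel-verified Lean document; each statement's English description precedes it below -/
import Mathlib

section
/- Let Ψ be a stationary random measure on (Ω,𝓕,P) with ergodic P and intensity λ ∈ (0,∞). Let F be a flow-adapted jointly measurable map such that P-almost surely F(ω,·,·) is a balancing density for the pair (λ·Leb, Ψ(ω)). Then for every measurable H : M → [0,∞] and every Borel set B ⊆ ℝ^d with 0 < Leb(B) < ∞, one has E[ ∫_{ℝ^d} H(θ_ξ Ψ(ω)) F(ω,0,ξ) Ψ(ω)(dξ) ] = (1/(λ·Leb(B))) · E[ ∫_B H(θ_s Ψ(ω)) Ψ(ω)(ds) ]. (The right-hand side is the Palm expectation of H evaluated at Ψ; thus shifting Ψ by a random point with conditional law F(ω,0,·)Ψ(ω) yields the Palm version of Ψ, i.e. a shift-coupling of Ψ and its Palm version.) -/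
open MeasureTheory Filter Metric Bornology
open scoped ENNReal NNReal Topology

noncomputable section

attribute [local instance] Classical.propDecidable

/-- Euclidean space `ℝ^d`. -/
abbrev Rd (d : ℕ) : Type := EuclideanSpace ℝ (Fin d)

/-- Locally finite: finite on bounded sets. -/
def LocFin {d : ℕ} (μ : Measure (Rd d)) : Prop :=
  ∀ s : Set (Rd d), IsBounded s → μ s < ⊤

/-- A sub-balancing density for `(φ, ψ)`. -/
def IsSubBalancing {d : ℕ} (φ ψ : Measure (Rd d)) (f : Rd d → Rd d → ℝ) : Prop :=
  Measurable (Function.uncurry f) ∧ (∀ x ξ, 0 ≤ f x ξ) ∧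
  (∀ x, ∫⁻ ξ, ENNReal.ofReal (f x ξ) ∂ψ ≤ 1) ∧
  (∀ ξ, ∫⁻ x, ENNReal.ofReal (f x ξ) ∂φ ≤ 1)

/-- A balancing density for `(φ, ψ)`. -/
def IsBalancing {d : ℕ} (φ ψ : Measure (Rd d)) (f : Rd d → Rd d → ℝ) : Prop :=
  IsSubBalancing φ ψ f ∧
  (∀ᵐ x ∂φ, ∫⁻ ξ, ENNReal.ofReal (f x ξ) ∂ψ = 1) ∧
  (∀ᵐ ξ ∂ψ, ∫⁻ x, ENNReal.ofReal (f x ξ) ∂φ = 1)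

/-- A constrained density for `(φ, ψ)`. -/
def IsConstrainedDensity {d : ℕ} (φ ψ : Measure (Rd d)) (f : Rd d → Rd d → ℝ) : Prop :=
  IsSubBalancing φ ψ f ∧ ∀ x ξ, f x ξ ≤ 1

/-- The site `x` is `f`-unexhausted. -/
def Unexhausted {d : ℕ} (ψ : Measure (Rd d)) (f : Rd d → Rd d → ℝ) (x : Rd d) : Prop :=
  ∫⁻ ξ, ENNReal.ofReal (f x ξ) ∂ψ < 1

/-- The center `ξ` is `f`-unsated. -/
def Unsated {d : ℕ} (φ : Measure (Rd d)) (f : Rd d → Rd d → ℝ) (ξ : Rd d) : Prop :=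
  ∫⁻ x, ENNReal.ofReal (f x ξ) ∂φ < 1

/-- The site `x₀` `f`-desires the center `ξ₀`. -/
def SiteDesires {d : ℕ} (ψ : Measure (Rd d)) (f : Rd d → Rd d → ℝ) (x₀ ξ₀ : Rd d) : Prop :=
  f x₀ ξ₀ < 1 ∧ (Unexhausted ψ f x₀ ∨ ∃ ξ₁, dist x₀ ξ₀ < dist x₀ ξ₁ ∧ 0 < f x₀ ξ₁)

/-- The center `ξ₀` `f`-desires the site `x₀`. -/
def CenterDesires {d : ℕ} (φ : Measure (Rd d)) (f : Rd d → Rd d → ℝ) (x₀ ξ₀ : Rd d) : Prop :=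
  f x₀ ξ₀ < 1 ∧ (Unsated φ f ξ₀ ∨ ∃ x₁, dist x₀ ξ₀ < dist x₁ ξ₀ ∧ 0 < f x₁ ξ₀)

/-- A stable constrained density for `(φ, ψ)`. -/
def IsStableDensity {d : ℕ} (φ ψ : Measure (Rd d)) (f : Rd d → Rd d → ℝ) : Prop :=
  IsConstrainedDensity φ ψ f ∧
  ¬∃ x₀ ξ₀, SiteDesires ψ f x₀ ξ₀ ∧ CenterDesires φ f x₀ ξ₀

/-- Application radius given previous rejection function `Rp`. -/
def appRad {d : ℕ} (ψ : Measure (Rd d)) (Rp : Rd d → Rd d → ℝ) (x : Rd d) : ℝ≥0∞ :=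
  sSup (ENNReal.ofReal '' {a : ℝ | 0 ≤ a ∧
    ∫⁻ ξ in closedBall x a, ENNReal.ofReal (1 - Rp x ξ) ∂ψ ≤ 1})

/-- The boundary weight `c` in the application step. -/
def appC {d : ℕ} (ψ : Measure (Rd d)) (Rp : Rd d → Rd d → ℝ) (x : Rd d) : ℝ :=
  if appRad ψ Rp x ≠ ⊤ ∧
      0 < ∫⁻ ξ in sphere x (appRad ψ Rp x).toReal, ENNReal.ofReal (1 - Rp x ξ) ∂ψ then
    1 - (1 - (∫⁻ ξ in ball x (appRad ψ Rp x).toReal, ENNReal.ofReal (1 - Rp x ξ) ∂ψ).toReal) /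
      (∫⁻ ξ in sphere x (appRad ψ Rp x).toReal, ENNReal.ofReal (1 - Rp x ξ) ∂ψ).toReal
  else 1

/-- The application function built from the previous rejection function `Rp`. -/
def appFun {d : ℕ} (ψ : Measure (Rd d)) (Rp : Rd d → Rd d → ℝ) (x ξ : Rd d) : ℝ :=
  if ENNReal.ofReal (dist x ξ) < appRad ψ Rp x then 1
  else if ENNReal.ofReal (dist x ξ) = appRad ψ Rp x then
    appC ψ Rp x * Rp x ξ + (1 - appC ψ Rp x)
  else 0

/-- Rejection radius given the current application function `A`. -/
def rejRad {d : ℕ} (φ : Measure (Rd d)) (A : Rd d → Rd d → ℝ) (ξ : Rd d) : ℝ≥0∞ :=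
  sSup (ENNReal.ofReal '' {r : ℝ | 0 ≤ r ∧
    ∫⁻ x in closedBall ξ r, ENNReal.ofReal (A x ξ) ∂φ ≤ 1})

/-- The boundary weight `c′` in the rejection step. -/
def rejC {d : ℕ} (φ : Measure (Rd d)) (A : Rd d → Rd d → ℝ) (ξ : Rd d) : ℝ :=
  if rejRad φ A ξ ≠ ⊤ ∧
      0 < ∫⁻ x in sphere ξ (rejRad φ A ξ).toReal, ENNReal.ofReal (A x ξ) ∂φ then
    1 - (1 - (∫⁻ x in ball ξ (rejRad φ A ξ).toReal, ENNReal.ofReal (A x ξ) ∂φ).toReal) /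
      (∫⁻ x in sphere ξ (rejRad φ A ξ).toReal, ENNReal.ofReal (A x ξ) ∂φ).toReal
  else 0

/-- The rejection function built from the current application function `A`. -/
def rejFun {d : ℕ} (φ : Measure (Rd d)) (A : Rd d → Rd d → ℝ) (x ξ : Rd d) : ℝ :=
  if ENNReal.ofReal (dist x ξ) < rejRad φ A ξ then 0
  else if ENNReal.ofReal (dist x ξ) = rejRad φ A ξ then rejC φ A ξ * A x ξ
  else A x ξ

/-- `GS_R φ ψ n` is the rejection function `Rₙ` of the site-optimal Gale–Shapley
algorithm (so `GS_R φ ψ 0 = R₀ = 0`). -/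
def GS_R {d : ℕ} (φ ψ : Measure (Rd d)) : ℕ → Rd d → Rd d → ℝ
  | 0 => fun _ _ => 0
  | n + 1 => rejFun φ (appFun ψ (GS_R φ ψ n))

/-- `GS_A φ ψ n` is the application function `Aₙ₊₁` (the one built from `Rₙ`). -/
def GS_A {d : ℕ} (φ ψ : Measure (Rd d)) (n : ℕ) : Rd d → Rd d → ℝ :=
  appFun ψ (GS_R φ ψ n)

/-- `GS_a φ ψ n` is the application radius `aₙ₊₁`. -/
def GS_a {d : ℕ} (φ ψ : Measure (Rd d)) (n : ℕ) : Rd d → ℝ≥0∞ :=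
  appRad ψ (GS_R φ ψ n)

/-- `GS_r φ ψ n` is the rejection radius `rₙ₊₁`. -/
def GS_r {d : ℕ} (φ ψ : Measure (Rd d)) (n : ℕ) : Rd d → ℝ≥0∞ :=
  rejRad φ (GS_A φ ψ n)

/-- The limiting application function `A = limₙ Aₙ` (a monotone limit, hence a `⨆`). -/
def GS_Alim {d : ℕ} (φ ψ : Measure (Rd d)) (x ξ : Rd d) : ℝ := ⨆ n, GS_A φ ψ n x ξ

/-- The limiting rejection function `R = limₙ Rₙ` (a monotone limit, hence a `⨆`). -/
def GS_Rlim {d : ℕ} (φ ψ : Measure (Rd d)) (x ξ : Rd d) : ℝ := ⨆ n, GS_R φ ψ n x ξ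

/-- The site-optimal density `f_s = A − R` for `(φ, ψ)`. -/
def siteOptimal {d : ℕ} (φ ψ : Measure (Rd d)) (x ξ : Rd d) : ℝ :=
  GS_Alim φ ψ x ξ - GS_Rlim φ ψ x ξ

/-- The center-optimal density for `(φ, ψ)`. -/
def centerOptimal {d : ℕ} (φ ψ : Measure (Rd d)) (x ξ : Rd d) : ℝ :=
  siteOptimal ψ φ ξ x

/-- Assumption U. -/
def AssumptionU {d : ℕ} (φ ψ : Measure (Rd d)) : Prop :=
  (∀ᵐ x ∂φ, ∀ r : ℝ, 0 < r → ∃ s ∈ sphere x r, ψ (sphere x r \ {s}) = 0) ∧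
  (∀ᵐ ξ ∂ψ, ∀ r : ℝ, 0 < r → ∃ s ∈ sphere ξ r, φ (sphere ξ r \ {s}) = 0)

/-- A measurable flow on `Ω`. -/
def IsMeasurableFlow {Ω : Type*} [MeasurableSpace Ω] {d : ℕ} (θ : Rd d → Ω → Ω) : Prop :=
  Measurable (fun p : Rd d × Ω => θ p.1 p.2) ∧ θ 0 = id ∧
  ∀ s t : Rd d, θ s ∘ θ t = θ (s + t)

/-- `P` is invariant under the flow `θ`. -/
def IsFlowInvariant {Ω : Type*} [MeasurableSpace Ω] {d : ℕ} (θ : Rd d → Ω → Ω)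
    (P : Measure Ω) : Prop :=
  ∀ s, Measure.map (θ s) P = P

/-- `P` is ergodic for the flow `θ`. -/
def IsErgodicFlow {Ω : Type*} [MeasurableSpace Ω] {d : ℕ} (θ : Rd d → Ω → Ω)
    (P : Measure Ω) : Prop :=
  ∀ A : Set Ω, MeasurableSet A → (∀ s, θ s ⁻¹' A = A) → P A = 0 ∨ P A = 1

/-- A random measure: measurable and everywhere locally finite. -/
def IsRandomMeasure {Ω : Type*} [MeasurableSpace Ω] {d : ℕ} (Φ : Ω → Measure (Rd d)) : Prop :=
  (∀ B : Set (Rd d), MeasurableSet B → Measurable fun ω => Φ ω B) ∧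
  (∀ ω, LocFin (Φ ω))

/-- The random measure `Φ` is flow-adapted. -/
def FlowAdaptedMeasure {Ω : Type*} [MeasurableSpace Ω] {d : ℕ} (θ : Rd d → Ω → Ω)
    (Φ : Ω → Measure (Rd d)) : Prop :=
  ∀ ω s (B : Set (Rd d)), MeasurableSet B → Φ (θ s ω) B = Φ ω ((fun b => b + s) '' B)

/-- `Φ` has intensity `lam`. -/
def HasIntensity {Ω : Type*} [MeasurableSpace Ω] {d : ℕ} (P : Measure Ω)
    (Φ : Ω → Measure (Rd d)) (lam : ℝ≥0∞) : Prop :=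
  ∀ B : Set (Rd d), MeasurableSet B → ∫⁻ ω, Φ ω B ∂P = lam * volume B

/-- A flow-adapted jointly measurable function `F : Ω × ℝ^d × ℝ^d → ℝ`. -/
def FlowAdaptedKernel {Ω : Type*} [MeasurableSpace Ω] {d : ℕ} (θ : Rd d → Ω → Ω)
    (F : Ω → Rd d → Rd d → ℝ) : Prop :=
  Measurable (fun p : Ω × Rd d × Rd d => F p.1 p.2.1 p.2.2) ∧
  ∀ ω s x ξ, F (θ s ω) x ξ = F ω (x + s) (ξ + s)

/-- The shift `θ_t μ` of a measure: `(θ_t μ)(B) = μ(B + t)`. -/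
def shiftMeasure {d : ℕ} (t : Rd d) (μ : Measure (Rd d)) : Measure (Rd d) :=
  Measure.map (fun x => x - t) μ

/-- `s(x)` of the Voronoi transport kernel. -/
def vRad {d : ℕ} (ψ : Measure (Rd d)) (x : Rd d) : ℝ≥0∞ :=
  sSup (ENNReal.ofReal '' {s : ℝ | 0 ≤ s ∧ ψ (closedBall x s) ≤ 1})

/-- The boundary weight `c(x)` of the Voronoi density. -/
def vC {d : ℕ} (ψ : Measure (Rd d)) (x : Rd d) : ℝ :=
  if vRad ψ x ≠ ⊤ ∧ 0 < ψ (sphere x (vRad ψ x).toReal) then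
    (1 - (ψ (ball x (vRad ψ x).toReal)).toReal) / (ψ (sphere x (vRad ψ x).toReal)).toReal
  else 1

/-- The Voronoi density with respect to `ψ`. -/
def voronoiDensity {d : ℕ} (ψ : Measure (Rd d)) (x ξ : Rd d) : ℝ :=
  if ENNReal.ofReal (dist x ξ) < vRad ψ x then 1
  else if ENNReal.ofReal (dist x ξ) = vRad ψ x then vC ψ x
  else 0

/-- The Voronoi territory of `ξ` with respect to `ψ`. -/
def voronoiTerritory {d : ℕ} (ψ : Measure (Rd d)) (ξ : Rd d) : Set (Rd d) :=
  {x | 0 < voronoiDensity ψ x ξ}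

/-- The (topological) support of a measure. -/
def msupport {d : ℕ} (ψ : Measure (Rd d)) : Set (Rd d) := {x | ∀ U ∈ 𝓝 x, 0 < ψ U}

/-! Mass transport. Since `F ω · ξ` has `λ • Leb`-mass one for `Ψ ω`-a.e. `ξ`, the Palm integral
`E ∫_B h (θ_s ω) Ψ(ds)` equals `∫ λ dx · E ∫ 1_B(ξ) h (θ_ξ ω) F(ω, x, ξ) Ψ(dξ)`. Replacing `ω` by
`θ_{-x} ω`, which preserves `P`, and using that `Ψ` and `F` are flow-adapted, the inner expectation
becomes `E ∫ 1_B(ξ + x) h (θ_ξ ω) F(ω, 0, ξ) Ψ(dξ)`; integrating `1_B(ξ + x)` over `x` then gives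
the factor `Leb B`. -/

open ProbabilityTheory Function

namespace ProbabilityTheory.Kernel

variable {α β : Type*} {mα : MeasurableSpace α} {mβ : MeasurableSpace β}

theorem isSFiniteKernel_of_isFiniteMeasure (κ : Kernel α β) [∀ a, IsFiniteMeasure (κ a)] :
    IsSFiniteKernel κ := by
  -- split `α` according to the integer part of the total mass
  let level : α → ℕ := fun a => ⌊(κ a Set.univ).toReal⌋₊
  have hlevel : Measurable level :=
    Nat.measurable_floor.comp (κ.measurable_coe MeasurableSet.univ).ennreal_toReal
  let κs : ℕ → Kernel α β := fun m => piecewise (hlevel (measurableSet_singleton m)) κ 0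
  have hκs : ∀ m, IsFiniteKernel (κs m) := fun m => by
    refine ⟨⟨m + 1, by simp, fun a => ?_⟩⟩
    rw [piecewise_apply']
    split_ifs with ha
    · obtain rfl : level a = m := ha
      rw [← ENNReal.ofReal_toReal (measure_ne_top (κ a) _)]
      exact (ENNReal.ofReal_le_ofReal (Nat.lt_floor_add_one _).le).trans_eq
        (by rw [ENNReal.ofReal_add (by positivity) zero_le_one]; simp [level])
    · simp
  have hsum : Kernel.sum κs = κ := by
    ext a s hs
    simp [κs, sum_apply' _ _ hs, piecewise_apply']
  exact hsum ▸ isSFiniteKernel_sum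

theorem isSFiniteKernel_of_iUnion_eq_univ (κ : Kernel α β) {C : ℕ → Set β}
    (hC : ∀ n, MeasurableSet (C n)) (hcover : ⋃ n, C n = Set.univ)
    (hfin : ∀ a n, κ a (C n) ≠ ∞) : IsSFiniteKernel κ := by
  have hD := MeasurableSet.disjointed hC
  have hκD : ∀ n, IsSFiniteKernel (κ.restrict (hD n)) := fun n => by
    have : ∀ a, IsFiniteMeasure (κ.restrict (hD n) a) := fun a => by
      rw [restrict_apply]
      exact isFiniteMeasure_restrict.2
        (measure_mono (disjointed_subset C n) |>.trans_lt (hfin a n).lt_top).ne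
    exact isSFiniteKernel_of_isFiniteMeasure _
  have hsum : Kernel.sum (fun n => κ.restrict (hD n)) = κ := by
    ext1 a
    rw [sum_apply]
    simp only [restrict_apply]
    rw [← Measure.restrict_iUnion (disjoint_disjointed C) hD, iUnion_disjointed, hcover,
      Measure.restrict_univ]
  exact hsum ▸ isSFiniteKernel_sum

end ProbabilityTheory.Kernel

theorem LocFin.sigmaFinite {d : ℕ} {μ : Measure (Rd d)} (h : LocFin μ) : SigmaFinite μ :=
  have : IsFiniteMeasureOnCompacts μ := ⟨fun _ hK => h _ hK.isBounded⟩
  inferInstance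

section lintegral

variable {α β : Type*} [MeasurableSpace α] [MeasurableSpace β]

theorem lintegral_eq_lintegral_lintegral_mul_of_ae_lintegral_eq_one {μ : Measure α}
    {ν : Measure β} [SFinite μ] [SFinite ν] {f : α → β → ℝ≥0∞} (hf : Measurable (uncurry f))
    (hf_one : ∀ᵐ y ∂ν, ∫⁻ x, f x y ∂μ = 1) {g : β → ℝ≥0∞} (hg : Measurable g) :
    ∫⁻ y, g y ∂ν = ∫⁻ x, ∫⁻ y, g y * f x y ∂ν ∂μ := by
  calc ∫⁻ y, g y ∂ν = ∫⁻ y, g y * ∫⁻ x, f x y ∂μ ∂ν :=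
        lintegral_congr_ae (hf_one.mono fun y hy => by simp only [hy, mul_one])
    _ = ∫⁻ y, ∫⁻ x, g y * f x y ∂μ ∂ν :=
        lintegral_congr fun y => (lintegral_const_mul _ (hf.comp measurable_prodMk_right)).symm
    _ = ∫⁻ x, ∫⁻ y, g y * f x y ∂ν ∂μ :=
        lintegral_lintegral_swap (by fun_prop)

theorem lintegral_lintegral_indicator_add_mul {G : Type*} [MeasurableSpace G] [AddGroup G]
    [MeasurableAdd₂ G] {μ ν : Measure G} [μ.IsAddLeftInvariant] [SFinite μ] [SFinite ν]
    {B : Set G} (hB : MeasurableSet B) {k : G → ℝ≥0∞} (hk : Measurable k) :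
    ∫⁻ x, ∫⁻ ξ, B.indicator 1 (ξ + x) * k ξ ∂ν ∂μ = μ B * ∫⁻ ξ, k ξ ∂ν := by
  have hB' : Measurable (B.indicator (1 : G → ℝ≥0∞)) := measurable_one.indicator hB
  rw [lintegral_lintegral_swap ((hB'.comp (measurable_snd.add measurable_fst)).mul
    (hk.comp measurable_snd)).aemeasurable, ← lintegral_const_mul _ hk]
  refine lintegral_congr fun ξ => ?_
  have hξ : Measurable fun x => B.indicator (1 : G → ℝ≥0∞) (ξ + x) :=
    hB'.comp (measurable_const_add ξ)
  rw [lintegral_mul_const _ hξ, ← measure_preimage_add μ ξ B,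
    ← lintegral_indicator_one (measurable_const_add ξ hB)]
  rfl

end lintegral

section flow

variable {Ω : Type*} [MeasurableSpace Ω] {d : ℕ}

namespace IsRandomMeasure

variable {Ψ : Ω → Measure (Rd d)}

theorem measurable (hΨ : IsRandomMeasure Ψ) : Measurable Ψ :=
  Measure.measurable_of_measurable_coe _ hΨ.1

def toKernel (hΨ : IsRandomMeasure Ψ) : Kernel Ω (Rd d) := ⟨Ψ, hΨ.measurable⟩

theorem isSFiniteKernel_toKernel (hΨ : IsRandomMeasure Ψ) : IsSFiniteKernel hΨ.toKernel :=
  hΨ.toKernel.isSFiniteKernel_of_iUnion_eq_univ (fun _ => measurableSet_closedBall)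
    (iUnion_closedBall_nat 0) fun ω _ => (hΨ.2 ω _ isBounded_closedBall).ne

theorem measurable_lintegral (hΨ : IsRandomMeasure Ψ) {f : Ω → Rd d → ℝ≥0∞}
    (hf : Measurable (uncurry f)) : Measurable fun ω => ∫⁻ ξ, f ω ξ ∂Ψ ω :=
  have := hΨ.isSFiniteKernel_toKernel
  hf.lintegral_kernel_prod_right (κ := hΨ.toKernel)

theorem comp (hΨ : IsRandomMeasure Ψ) {Ω' : Type*} [MeasurableSpace Ω'] {g : Ω' → Ω}
    (hg : Measurable g) : IsRandomMeasure fun ω' => Ψ (g ω') :=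
  ⟨fun B hB => (hΨ.1 B hB).comp hg, fun ω' => hΨ.2 (g ω')⟩

end IsRandomMeasure

variable {θ : Rd d → Ω → Ω}

theorem IsMeasurableFlow.measurable_apply (hflow : IsMeasurableFlow θ) (s : Rd d) :
    Measurable (θ s) :=
  hflow.1.comp measurable_prodMk_left

theorem IsMeasurableFlow.apply_apply (hflow : IsMeasurableFlow θ) (s t : Rd d) (ω : Ω) :
    θ s (θ t ω) = θ (s + t) ω :=
  congrFun (hflow.2.2 s t) ω

theorem FlowAdaptedMeasure.shiftMeasure_eq {Ψ : Ω → Measure (Rd d)}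
    (hΨa : FlowAdaptedMeasure θ Ψ) (s : Rd d) (ω : Ω) :
    shiftMeasure s (Ψ ω) = Ψ (θ s ω) := by
  ext B hB
  rw [shiftMeasure, Measure.map_apply (measurable_sub_const s) hB, hΨa ω s B hB,
    Set.image_add_right]
  simp_rw [sub_eq_add_neg]

theorem lintegral_lintegral_eq_lintegral_lintegral_flow {P : Measure Ω}
    {Ψ : Ω → Measure (Rd d)} (hflow : IsMeasurableFlow θ) (hinv : IsFlowInvariant θ P)
    (hΨ : IsRandomMeasure Ψ) (hΨa : FlowAdaptedMeasure θ Ψ) {g : Ω → Rd d → ℝ≥0∞}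
    (hg : Measurable (uncurry g)) (s : Rd d) :
    ∫⁻ ω, ∫⁻ ξ, g ω ξ ∂Ψ ω ∂P = ∫⁻ ω, ∫⁻ ξ, g (θ s ω) (ξ - s) ∂Ψ ω ∂P := by
  conv_lhs => rw [← hinv s]
  rw [lintegral_map (hΨ.measurable_lintegral hg) (hflow.measurable_apply s)]
  refine lintegral_congr fun ω => ?_
  rw [← hΨa.shiftMeasure_eq, shiftMeasure,
    lintegral_map hg.of_uncurry_left (measurable_sub_const s)]

end flow

theorem lintegral_setLIntegral_flow_eq_mul_lintegral_lintegral {Ω : Type*} [MeasurableSpace Ω]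
    {d : ℕ} {P : Measure Ω} [SFinite P] {θ : Rd d → Ω → Ω} (hflow : IsMeasurableFlow θ)
    (hinv : IsFlowInvariant θ P) {Ψ : Ω → Measure (Rd d)} (hΨ : IsRandomMeasure Ψ)
    (hΨa : FlowAdaptedMeasure θ Ψ) {lam : ℝ≥0∞} {F : Ω → Rd d → Rd d → ℝ}
    (hF : FlowAdaptedKernel θ F)
    (hbal : ∀ᵐ ω ∂P, ∀ᵐ ξ ∂Ψ ω, ∫⁻ x, ENNReal.ofReal (F ω x ξ) ∂(lam • volume) = 1)
    {h : Ω → ℝ≥0∞} (hh : Measurable h) {B : Set (Rd d)} (hB : MeasurableSet B) :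
    ∫⁻ ω, ∫⁻ s in B, h (θ s ω) ∂Ψ ω ∂P
      = lam * volume B * ∫⁻ ω, ∫⁻ ξ, h (θ ξ ω) * ENNReal.ofReal (F ω 0 ξ) ∂Ψ ω ∂P := by
  obtain ⟨hFm, hFθ⟩ := hF
  have hθ := hflow.1
  have h1B : Measurable (B.indicator (1 : Rd d → ℝ≥0∞)) := measurable_one.indicator hB
  set μ : Measure (Rd d) := lam • volume
  let G : Rd d → Ω → Rd d → ℝ≥0∞ := fun x ω ξ =>
    B.indicator 1 ξ * h (θ ξ ω) * ENNReal.ofReal (F ω x ξ)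
  have hG : Measurable fun p : (Ω × Rd d) × Rd d => G p.1.2 p.1.1 p.2 := by
    simp only [G]
    fun_prop
  calc ∫⁻ ω, ∫⁻ s in B, h (θ s ω) ∂Ψ ω ∂P
      = ∫⁻ ω, ∫⁻ x, ∫⁻ ξ, G x ω ξ ∂Ψ ω ∂μ ∂P := by
        refine lintegral_congr_ae (hbal.mono fun ω hω => ?_)
        have := (hΨ.2 ω).sigmaFinite
        have hind : B.indicator (fun s => h (θ s ω)) = fun ξ => B.indicator 1 ξ * h (θ ξ ω) := by
          ext ξ
          by_cases hξ : ξ ∈ B <;> simp [hξ]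
        show ∫⁻ s in B, h (θ s ω) ∂Ψ ω = _
        rw [← lintegral_indicator hB, hind]
        exact lintegral_eq_lintegral_lintegral_mul_of_ae_lintegral_eq_one
          (f := fun x ξ => ENNReal.ofReal (F ω x ξ)) (by fun_prop) hω (by fun_prop)
    _ = ∫⁻ x, ∫⁻ ω, ∫⁻ ξ, G x ω ξ ∂Ψ ω ∂P ∂μ :=
        lintegral_lintegral_swap ((hΨ.comp measurable_fst).measurable_lintegral hG).aemeasurable
    _ = ∫⁻ x, ∫⁻ ω, ∫⁻ ξ, B.indicator 1 (ξ + x) * (h (θ ξ ω) * ENNReal.ofReal (F ω 0 ξ))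
          ∂Ψ ω ∂P ∂μ := by
        refine lintegral_congr fun x => ?_
        rw [lintegral_lintegral_eq_lintegral_lintegral_flow hflow hinv hΨ hΨa (g := G x)
          (by fun_prop) (-x)]
        simp only [G, sub_neg_eq_add, hflow.apply_apply, hFθ, add_neg_cancel_right,
          add_neg_cancel, mul_assoc]
    _ = ∫⁻ ω, ∫⁻ x, ∫⁻ ξ, B.indicator 1 (ξ + x) * (h (θ ξ ω) * ENNReal.ofReal (F ω 0 ξ))
          ∂Ψ ω ∂μ ∂P :=
        (lintegral_lintegral_swap
          ((hΨ.comp measurable_fst).measurable_lintegral (by fun_prop)).aemeasurable).symm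
    _ = lam * volume B * ∫⁻ ω, ∫⁻ ξ, h (θ ξ ω) * ENNReal.ofReal (F ω 0 ξ) ∂Ψ ω ∂P := by
        rw [← lintegral_const_mul _ (hΨ.measurable_lintegral (by fun_prop))]
        refine lintegral_congr fun ω => ?_
        have := (hΨ.2 ω).sigmaFinite
        exact lintegral_lintegral_indicator_add_mul hB (by fun_prop)

theorem stmt6_general {Ω : Type*} [MeasurableSpace Ω] {d : ℕ}
    (P : Measure Ω) [IsProbabilityMeasure P]
    (θ : Rd d → Ω → Ω) (hflow : IsMeasurableFlow θ) (hinv : IsFlowInvariant θ P)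
    (Ψ : Ω → Measure (Rd d)) (hΨ : IsRandomMeasure Ψ) (hΨa : FlowAdaptedMeasure θ Ψ)
    (lam : ℝ≥0∞) (hlam0 : 0 < lam) (hlamtop : lam < ⊤)
    (F : Ω → Rd d → Rd d → ℝ) (hF : FlowAdaptedKernel θ F)
    (hbal : ∀ᵐ ω ∂P, IsBalancing (lam • (volume : Measure (Rd d))) (Ψ ω) (F ω))
    (H : Measure (Rd d) → ℝ≥0∞) (hH : Measurable H)
    (B : Set (Rd d)) (hB : MeasurableSet B) (hB0 : 0 < volume B) (hBtop : volume B < ⊤) :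
    ∫⁻ ω, ∫⁻ ξ, H (shiftMeasure ξ (Ψ ω)) * ENNReal.ofReal (F ω 0 ξ) ∂(Ψ ω) ∂P
      = (lam * volume B)⁻¹ * ∫⁻ ω, ∫⁻ s in B, H (shiftMeasure s (Ψ ω)) ∂(Ψ ω) ∂P := by
  simp only [hΨa.shiftMeasure_eq]
  rw [lintegral_setLIntegral_flow_eq_mul_lintegral_lintegral hflow hinv hΨ hΨa hF
    (hbal.mono fun _ hω => hω.2.2) (h := fun ω => H (Ψ ω)) (hH.comp hΨ.measurable) hB,
    ← mul_assoc, ENNReal.inv_mul_cancel (mul_ne_zero hlam0.ne' hB0.ne')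
      (ENNReal.mul_ne_top hlamtop.ne hBtop.ne), one_mul]

/-- Shift-coupling: shifting `Ψ` by a random point with conditional law
`F(ω,0,·)Ψ(ω)` yields the Palm version of `Ψ`. -/
theorem stmt6 {Ω : Type*} [MeasurableSpace Ω] {d : ℕ} (hd : 0 < d)
    (P : Measure Ω) [IsProbabilityMeasure P]
    (θ : Rd d → Ω → Ω) (hflow : IsMeasurableFlow θ) (hinv : IsFlowInvariant θ P)
    (herg : IsErgodicFlow θ P)
    (Ψ : Ω → Measure (Rd d)) (hΨ : IsRandomMeasure Ψ) (hΨa : FlowAdaptedMeasure θ Ψ)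
    (lam : ℝ≥0∞) (hlam0 : 0 < lam) (hlamtop : lam < ⊤) (hΨi : HasIntensity P Ψ lam)
    (F : Ω → Rd d → Rd d → ℝ) (hF : FlowAdaptedKernel θ F)
    (hbal : ∀ᵐ ω ∂P, IsBalancing (lam • (volume : Measure (Rd d))) (Ψ ω) (F ω))
    (H : Measure (Rd d) → ℝ≥0∞) (hH : Measurable H)
    (B : Set (Rd d)) (hB : MeasurableSet B) (hB0 : 0 < volume B) (hBtop : volume B < ⊤) :
    ∫⁻ ω, ∫⁻ ξ, H (shiftMeasure ξ (Ψ ω)) * ENNReal.ofReal (F ω 0 ξ) ∂(Ψ ω) ∂P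
      = (lam * volume B)⁻¹ * ∫⁻ ω, ∫⁻ s in B, H (shiftMeasure s (Ψ ω)) ∂(Ψ ω) ∂P :=
  stmt6_general P θ hflow hinv Ψ hΨ hΨa lam hlam0 hlamtop F hF hbal H hH B hB hB0 hBtop
end
end

section
/- Let f be a stable constrained density for (φ,ψ). Let X' := {x ∈ ℝ^d : ∫ f(x,ξ) ψ(dξ) < 1} be the set of f-unexhausted sites and Ξ' := {ξ ∈ ℝ^d : ∫ f(x,ξ) φ(dx) < 1} the set of f-unsated centers. If X' ≠ ∅, then ψ(Ξ') < 1; and if Ξ' ≠ ∅, then φ(X') < 1. In particular, φ(X') < 1 or ψ(Ξ') < 1. -/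
open MeasureTheory Filter Metric Bornology
open scoped ENNReal NNReal Topology

noncomputable section

attribute [local instance] Classical.propDecidable

theorem measure_le_lintegral_of_one_le {α : Type*} [MeasurableSpace α] {μ : Measure α}
    {g : α → ℝ≥0∞} (hg : AEMeasurable g μ) {s : Set α} (hs : ∀ a ∈ s, 1 ≤ g a) :
    μ s ≤ ∫⁻ a, g a ∂μ :=
  calc μ s ≤ μ {a | 1 ≤ g a} := measure_mono hs
    _ = 1 * μ {a | 1 ≤ g a} := (one_mul _).symm
    _ ≤ ∫⁻ a, g a ∂μ := mul_meas_ge_le_lintegral₀ hg 1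

namespace IsStableDensity

variable {d : ℕ} {φ ψ : Measure (Rd d)} {f : Rd d → Rd d → ℝ}

/-- An unexhausted site and an unsated center desire each other unless `f` saturates the pair. -/
theorem eq_one_of_unexhausted_of_unsated (hf : IsStableDensity φ ψ f) {x ξ : Rd d}
    (hx : Unexhausted ψ f x) (hξ : Unsated φ f ξ) : f x ξ = 1 := by
  by_contra hne
  have hlt : f x ξ < 1 := lt_of_le_of_ne (hf.1.2 x ξ) hne
  exact hf.2 ⟨x, ξ, ⟨hlt, Or.inl hx⟩, ⟨hlt, Or.inl hξ⟩⟩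

theorem measure_unsated_lt_one (hf : IsStableDensity φ ψ f) {x₀ : Rd d}
    (hx₀ : Unexhausted ψ f x₀) : ψ {ξ | Unsated φ f ξ} < 1 := by
  have hmeas : Measurable fun ξ => ENNReal.ofReal (f x₀ ξ) :=
    ENNReal.measurable_ofReal.comp hf.1.1.1.of_uncurry_left
  refine lt_of_le_of_lt (measure_le_lintegral_of_one_le hmeas.aemeasurable ?_) hx₀
  intro ξ hξ
  rw [hf.eq_one_of_unexhausted_of_unsated hx₀ hξ, ENNReal.ofReal_one]

theorem measure_unexhausted_lt_one (hf : IsStableDensity φ ψ f) {ξ₀ : Rd d}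
    (hξ₀ : Unsated φ f ξ₀) : φ {x | Unexhausted ψ f x} < 1 := by
  have hmeas : Measurable fun x => ENNReal.ofReal (f x ξ₀) :=
    ENNReal.measurable_ofReal.comp hf.1.1.1.of_uncurry_right
  refine lt_of_le_of_lt (measure_le_lintegral_of_one_le hmeas.aemeasurable ?_) hξ₀
  intro x hx
  rw [hf.eq_one_of_unexhausted_of_unsated hx hξ₀, ENNReal.ofReal_one]

end IsStableDensity

theorem stmt8_general {d : ℕ} (φ ψ : Measure (Rd d))
    (f : Rd d → Rd d → ℝ) (hf : IsStableDensity φ ψ f) :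
    (({x | Unexhausted ψ f x}).Nonempty → ψ {ξ | Unsated φ f ξ} < 1) ∧
    (({ξ | Unsated φ f ξ}).Nonempty → φ {x | Unexhausted ψ f x} < 1) ∧
    (φ {x | Unexhausted ψ f x} < 1 ∨ ψ {ξ | Unsated φ f ξ} < 1) := by
  refine ⟨fun ⟨_, hx⟩ => hf.measure_unsated_lt_one hx,
    fun ⟨_, hξ⟩ => hf.measure_unexhausted_lt_one hξ, ?_⟩
  rcases Set.eq_empty_or_nonempty {x | Unexhausted ψ f x} with hX | ⟨_, hx⟩
  · left
    simp [hX]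
  · exact Or.inr (hf.measure_unsated_lt_one hx)

/-- For a stable constrained density, if there is an unexhausted site then
the unsated centers have `ψ`-measure `< 1`, and if there is an unsated center then the
unexhausted sites have `φ`-measure `< 1`; in particular one of the two always holds. -/
theorem stmt8 {d : ℕ} (φ ψ : Measure (Rd d)) (hφ : LocFin φ) (hψ : LocFin ψ)
    (f : Rd d → Rd d → ℝ) (hf : IsStableDensity φ ψ f) :
    (({x | Unexhausted ψ f x}).Nonempty → ψ {ξ | Unsated φ f ξ} < 1) ∧
    (({ξ | Unsated φ f ξ}).Nonempty → φ {x | Unexhausted ψ f x} < 1) ∧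
    (φ {x | Unexhausted ψ f x} < 1 ∨ ψ {ξ | Unsated φ f ξ} < 1) :=
  stmt8_general φ ψ f hf
end
end

section
/- Suppose every open half-space of ℝ^d has infinite ψ-measure. Then for every ξ ∈ ℝ^d, the Voronoi territory of ξ with respect to ψ is a bounded set. -/
open MeasureTheory Filter Metric Bornology
open scoped ENNReal NNReal Topology

noncomputable section

attribute [local instance] Classical.propDecidable

/-!
If `x` lies in the Voronoi territory of `ξ`, every closed ball around `x` of radius less than
`|x - ξ|` has `ψ`-mass at most `1`. Were the territory unbounded, there would be such points `x`
arbitrarily far from `ξ` whose directions `(x - ξ) / |x - ξ|` converge to some unit vector `a`.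
Some bounded piece of the half-space `{y : ⟪a, y⟫ > ⟪a, ξ⟫ + 1}` has mass exceeding `1`, and for
`x` far enough out in direction close to `a` this piece fits inside `B̄(x, |x - ξ| - 1/4)`.
-/

open scoped InnerProductSpace

lemma norm_inv_norm_smul_self {E : Type*} [NormedAddCommGroup E] [NormedSpace ℝ E] {x : E}
    (hx : x ≠ 0) : ‖‖x‖⁻¹ • x‖ = 1 := by
  rw [norm_smul, norm_inv, norm_norm, inv_mul_cancel₀ (norm_ne_zero_iff.2 hx)]

section Geometry

variable {E : Type*} [NormedAddCommGroup E] [InnerProductSpace ℝ E]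

lemma norm_smul_sub_le_sub_quarter {u a w : E} {M r : ℝ} (hu : ‖u‖ = 1)
    (hua : ‖u - a‖ * M ≤ 1 / 2) (hw : ‖w‖ ≤ M) (haw : 1 < ⟪a, w⟫_ℝ) (hr : 2 * M ^ 2 ≤ r) :
    ‖r • u - w‖ ≤ r - 1 / 4 := by
  have huw : 1 / 2 ≤ ⟪u, w⟫_ℝ := by
    have hcs : |⟪u - a, w⟫_ℝ| ≤ ‖u - a‖ * ‖w‖ := abs_real_inner_le_norm _ _
    have hsplit : ⟪u, w⟫_ℝ = ⟪a, w⟫_ℝ + ⟪u - a, w⟫_ℝ := by rw [inner_sub_left]; ring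
    have := mul_le_mul_of_nonneg_left hw (norm_nonneg (u - a))
    linarith [neg_abs_le ⟪u - a, w⟫_ℝ]
  have hM : 1 / 2 ≤ M := by
    have := real_inner_le_norm u w
    rw [hu, one_mul] at this
    linarith
  -- `‖r • u - w‖² = r² - 2 r ⟪u, w⟫ + ‖w‖² ≤ r² - r + M² ≤ r² - r / 2`
  have hsq : ‖r • u - w‖ ^ 2 ≤ (r - 1 / 4) ^ 2 := by
    rw [norm_sub_sq_real, norm_smul, hu, real_inner_smul_left, Real.norm_eq_abs,
      abs_of_nonneg (by nlinarith)]
    nlinarith [sq_le_sq' (by linarith [norm_nonneg w]) hw]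
  exact (pow_le_pow_iff_left₀ (norm_nonneg _) (by nlinarith) two_ne_zero).1 hsq

lemma halfSpace_inter_closedBall_subset_closedBall {a ξ x : E} {M : ℝ} (hxξ : x ≠ ξ)
    (hdir : ‖‖x - ξ‖⁻¹ • (x - ξ) - a‖ * M ≤ 1 / 2) (hfar : 2 * M ^ 2 ≤ dist x ξ) :
    {y | ⟪a, ξ⟫_ℝ + 1 < ⟪a, y⟫_ℝ} ∩ closedBall ξ M ⊆ closedBall x (dist x ξ - 1 / 4) := by
  rintro y ⟨hyH, hyB⟩
  have hx : dist x ξ • (‖x - ξ‖⁻¹ • (x - ξ)) = x - ξ := by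
    rw [smul_smul, dist_eq_norm, mul_inv_cancel₀ (norm_ne_zero_iff.2 (sub_ne_zero.2 hxξ)),
      one_smul]
  have haw : 1 < ⟪a, y - ξ⟫_ℝ := by
    rw [inner_sub_right]
    linarith [hyH.out]
  have := norm_smul_sub_le_sub_quarter (norm_inv_norm_smul_self (sub_ne_zero.2 hxξ)) hdir
    (by rwa [← dist_eq_norm]) haw hfar
  rwa [hx, sub_sub_sub_cancel_right, ← dist_eq_norm, dist_comm] at this

end Geometry

lemma exists_lt_measure_inter_closedBall {X : Type*} [PseudoMetricSpace X] [MeasurableSpace X]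
    (μ : Measure X) {S : Set X} {c : ℝ≥0∞} (hc : c < μ S) (x : X) :
    ∃ n : ℕ, c < μ (S ∩ closedBall x n) := by
  have hmono : Monotone fun n : ℕ ↦ S ∩ closedBall x n := fun m n hmn ↦
    Set.inter_subset_inter_right _ (closedBall_subset_closedBall (by exact_mod_cast hmn))
  rw [← iUnion_inter_closedBall_nat S x, hmono.measure_iUnion] at hc
  exact lt_iSup_iff.1 hc

section Voronoi

variable {d : ℕ} {ψ : Measure (Rd d)} {x ξ : Rd d}

lemma ofReal_dist_le_vRad (hx : x ∈ voronoiTerritory ψ ξ) :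
    ENNReal.ofReal (dist x ξ) ≤ vRad ψ x := by
  by_contra! h
  have hx : 0 < voronoiDensity ψ x ξ := hx
  rw [voronoiDensity, if_neg (not_lt.2 h.le), if_neg h.ne'] at hx
  exact hx.false

lemma measure_closedBall_le_one_of_ofReal_lt_vRad {s : ℝ} (hs : ENNReal.ofReal s < vRad ψ x) :
    ψ (closedBall x s) ≤ 1 := by
  obtain ⟨_, ⟨t, ⟨-, ht⟩, rfl⟩, hst⟩ := lt_sSup_iff.1 hs
  exact (measure_mono (closedBall_subset_closedBall
    ((ENNReal.ofReal_lt_ofReal_iff'.1 hst).1.le))).trans ht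

lemma measure_closedBall_le_one_of_mem_voronoiTerritory (hx : x ∈ voronoiTerritory ψ ξ)
    {s : ℝ} (hs : s < dist x ξ) : ψ (closedBall x s) ≤ 1 := by
  rcases lt_or_ge s 0 with hs0 | hs0
  · simp [closedBall_eq_empty.2 hs0]
  exact measure_closedBall_le_one_of_ofReal_lt_vRad
    (((ENNReal.ofReal_lt_ofReal_iff (hs0.trans_lt hs)).2 hs).trans_le (ofReal_dist_le_vRad hx))

end Voronoi

theorem stmt18_general {d : ℕ} (ψ : Measure (Rd d))
    (hhalf : ∀ v : Rd d, ‖v‖ = 1 → ∀ b : ℝ, ψ {x : Rd d | b < (inner ℝ v x : ℝ)} = ⊤) :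
    ∀ ξ : Rd d, IsBounded (voronoiTerritory ψ ξ) := by
  intro ξ
  by_contra hB
  obtain ⟨x, hxT, hxd⟩ : ∃ x : ℕ → Rd d,
      (∀ n, x n ∈ voronoiTerritory ψ ξ) ∧ ∀ n : ℕ, (n : ℝ) < dist (x n) ξ := by
    simp only [isBounded_iff_subset_closedBall ξ, Set.not_subset, mem_closedBall, not_le,
      not_exists] at hB
    choose x hxT hxd using fun n : ℕ ↦ hB n
    exact ⟨x, hxT, hxd⟩
  have hxξ (n : ℕ) : x n ≠ ξ := dist_pos.1 ((Nat.cast_nonneg n).trans_lt (hxd n))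
  set u := fun n ↦ ‖x n - ξ‖⁻¹ • (x n - ξ)
  obtain ⟨a, ha, φ, hφ, hlim⟩ := (isCompact_sphere (0 : Rd d) 1).tendsto_subseq
    fun n ↦ mem_sphere_zero_iff_norm.2 (norm_inv_norm_smul_self (sub_ne_zero.2 (hxξ n)))
  obtain ⟨M, hM⟩ := exists_lt_measure_inter_closedBall ψ
    ((hhalf a (mem_sphere_zero_iff_norm.1 ha) (⟪a, ξ⟫_ℝ + 1)).symm ▸ ENNReal.one_lt_top) ξ
  have hdir : ∀ᶠ n in atTop, ‖u (φ n) - a‖ * M < 1 / 2 := by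
    have := (tendsto_iff_norm_sub_tendsto_zero.1 hlim).mul_const (M : ℝ)
    rw [zero_mul] at this
    exact this.eventually (gt_mem_nhds one_half_pos)
  have hfar : ∀ᶠ n in atTop, 2 * (M : ℝ) ^ 2 ≤ dist (x (φ n)) ξ :=
    ((tendsto_atTop_mono (fun n ↦ (hxd n).le) tendsto_natCast_atTop_atTop).comp
      hφ.tendsto_atTop).eventually_ge_atTop _
  obtain ⟨n, hn_dir, hn_far⟩ := (hdir.and hfar).exists
  have hsub := halfSpace_inter_closedBall_subset_closedBall (hxξ (φ n)) hn_dir.le hn_far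
  have hball := measure_closedBall_le_one_of_mem_voronoiTerritory (hxT (φ n))
    (sub_lt_self _ (by norm_num : (0 : ℝ) < 1 / 4))
  exact (hM.trans_le ((measure_mono hsub).trans hball)).false

/-- If every open half-space has infinite `ψ`-measure, then all Voronoi
territories with respect to `ψ` are bounded. -/
theorem stmt18 {d : ℕ} (ψ : Measure (Rd d)) (hψ : LocFin ψ) (hmass : 1 ≤ ψ Set.univ)
    (hhalf : ∀ v : Rd d, ‖v‖ = 1 → ∀ b : ℝ, ψ {x : Rd d | b < (inner ℝ v x : ℝ)} = ⊤) :
    ∀ ξ : Rd d, IsBounded (voronoiTerritory ψ ξ) :=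
  stmt18_general ψ hhalf
end
end
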